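/- If L is a tangled labeling of an n-element poset P, then L⁻¹(n) is a minimal element of P. -/

import Mathlib

open scoped Classical

noncomputable section

abbrev Labeling (P : Type*) [Fintype P] : Type _ := P ≃ Fin (Fintype.card P)

variable {P : Type*} [Fintype P] [PartialOrder P]

def IsLinearExt (L : Labeling P) : Prop := ∀ x y : P, x ≤ y → L x ≤ L y

def lSucc (L : Labeling P) (v : P)
    (h : (Finset.univ.filter fun y => v < y).Nonempty) : P :=
  L.symm (((Finset.univ.filter fun y => v < y).image L).min' (h.image _))

lemma lt_lSucc (L : Labeling P) (v : P)
    (h : (Finset.univ.filter fun y => v < y).Nonempty) : v < lSucc L v h := by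
  have hmem := Finset.min'_mem ((Finset.univ.filter fun y => v < y).image L) (h.image _)
  obtain ⟨y, hy, hLy⟩ := Finset.mem_image.mp hmem
  have heq : lSucc L v h = y := by
    unfold lSucc
    rw [← hLy, Equiv.symm_apply_apply]
  rw [heq]
  exact (Finset.mem_filter.mp hy).2

def promChainFrom (L : Labeling P) (v : P) : List P :=
  if h : (Finset.univ.filter fun y => v < y).Nonempty then
    v :: promChainFrom L (lSucc L v h)
  else [v]
termination_by (Finset.univ.filter fun y => v < y).card
decreasing_by
  apply Finset.card_lt_card
  refine (Finset.ssubset_iff_of_subset ?_).mpr ?_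
  · intro z hz
    simp only [Finset.mem_filter, Finset.mem_univ, true_and] at *
    exact lt_trans (lt_lSucc L v h) hz
  · exact ⟨lSucc L v h, by simp [lt_lSucc L v h], by simp⟩

def promote (L : Labeling P) : Labeling P :=
  if h : Nonempty P then
    ((List.formPerm (promChainFrom L (L.symm ⟨0, @Fintype.card_pos P _ h⟩))).trans L).trans
      (finRotate (Fintype.card P)).symm
  else L

/-- The label of `x` under `L`, as an integer in `{1, …, n}`. -/
def labelOf (L : Labeling P) (x : P) : ℕ := (L x : ℕ) + 1

/-- The largest `a ∈ {0, …, n}` such that for all `j ∈ {n−a+1, …, n}`, the set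
`{x ∈ P : j ≤ L(x) ≤ n}` is an upper order ideal of `P`. -/
def frozenA (L : Labeling P) : ℕ :=
  sSup {a : ℕ | a ≤ Fintype.card P ∧
    ∀ j, Fintype.card P - a + 1 ≤ j → j ≤ Fintype.card P →
      IsUpperSet {x : P | j ≤ labelOf L x ∧ labelOf L x ≤ Fintype.card P}}

/-- `x` is frozen with respect to `L` if `n − a + 1 ≤ L(x) ≤ n`, where `a` is as in `frozenA`. -/
def IsFrozen (L : Labeling P) (x : P) : Prop :=
  Fintype.card P - frozenA L + 1 ≤ labelOf L x

/-- A labeling of an `n`-element poset is tangled if `n ≥ 2` and `∂^{n−2}(L)` is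
not a linear extension. -/
def IsTangled (L : Labeling P) : Prop :=
  2 ≤ Fintype.card P ∧ ¬ IsLinearExt (promote^[Fintype.card P - 2] L)

/-- A labeling of an `n`-element poset is `k`-untangled if `n ≥ k + 2` and
`∂^{n−k−2}(L)` is not a linear extension. -/
def IsUntangled (k : ℕ) (L : Labeling P) : Prop :=
  k + 2 ≤ Fintype.card P ∧ ¬ IsLinearExt (promote^[Fintype.card P - k - 2] L)

/-- The comparability graph of a poset. -/
def compGraph (P : Type*) [PartialOrder P] : SimpleGraph P where
  Adj x y := x ≠ y ∧ (x ≤ y ∨ y ≤ x)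
  symm := by
    constructor
    intro x y hxy
    exact ⟨hxy.1.symm, hxy.2.symm⟩
  loopless := by
    constructor
    intro x hx
    exact hx.1 rfl

/-- The standardization of an injective map from a finite type into a linear order:
the unique relabeling by `{1, …, n}` with the same relative order of values. -/
def standardize {R β : Type*} [Fintype R] [LinearOrder β]
    (f : R → β) (hf : Function.Injective f) : R ≃ Fin (Fintype.card R) :=
  have hcard : (Finset.univ.image f).card = Fintype.card R := by
    rw [Finset.card_image_of_injective _ hf, Finset.card_univ]
  (Equiv.ofBijective (fun x => (⟨f x, by simp⟩ : ↥(Finset.univ.image f)))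
    (by
      rw [Fintype.bijective_iff_injective_and_card]
      refine ⟨fun a b hab => hf (congrArg Subtype.val hab), ?_⟩
      rw [Fintype.card_coe, hcard])).trans
    ((Finset.univ.image f).orderIsoOfFin hcard).symm.toEquiv

/-- The toggle operator `τ_{k+1}`: it swaps the labels `k+1` and `k+2` (i.e. the
`Fin`-labels `k` and `k+1`) unless `L⁻¹(k+1) <_P L⁻¹(k+2)`. -/
def toggle (L : Labeling P) (k : ℕ) : Labeling P :=
  if h : k + 1 < Fintype.card P then
    if L.symm ⟨k, Nat.lt_of_succ_lt h⟩ < L.symm ⟨k + 1, h⟩ then L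
    else L.trans (Equiv.swap ⟨k, Nat.lt_of_succ_lt h⟩ ⟨k + 1, h⟩)
  else L

/-- An element `x` is `L`-golden if every element strictly above it has a larger label. -/
def IsGolden (L : Labeling P) (x : P) : Prop := ∀ y : P, x < y → L x < L y

/-- The largest label `n` of an `n`-element poset, as an element of `Fin n`. -/
def topFin (P : Type*) [Fintype P] [Nonempty P] : Fin (Fintype.card P) :=
  ⟨Fintype.card P - 1, Nat.sub_lt Fintype.card_pos Nat.one_pos⟩

/-!
Call `M` a linear extension above `t` if `M x ≤ M y` whenever `x ≤ y` and `M x ≥ t` (labels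
counted from `0`). Promotion lowers every label by one, except that an element of the promotion
chain takes the label of its `M`-successor minus one; above a threshold where `M` is already a
linear extension that successor carries the larger label, so a linear extension above `t + 1`
becomes one above `t`.

The invariant is: `M` is a linear extension above `s + 1`, and either above `s` or the element `q`
of label `s` is not minimal. If `q` stays off the promotion chain, it keeps its lower neighbour and
moves to label `s - 1`. If `q` is on the chain, the only element that can receive label `s - 1` is
the chain element whose successor is `q`, and everything above that one has label at least `s`,
so the promoted labeling is a linear extension above `s - 1`. The invariant holds for `L` and
`s = n - 1` when `L⁻¹(n)` is not minimal, and at `s = 1`, reached after `n - 2` promotions, it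
forces a linear extension.
-/

open Finset

lemma label_lSucc_le (L : Labeling P) (v : P) (h : (univ.filter fun y => v < y).Nonempty)
    {z : P} (hz : v < z) : L (lSucc L v h) ≤ L z := by
  have hmem : L z ∈ (univ.filter fun y => v < y).image L := mem_image_of_mem L (by simp [hz])
  simpa [lSucc] using min'_le _ _ hmem

lemma promChainFrom_of_nonempty (L : Labeling P) (v : P)
    (h : (univ.filter fun y => v < y).Nonempty) :
    promChainFrom L v = v :: promChainFrom L (lSucc L v h) := by
  rw [promChainFrom, dif_pos h]

lemma promChainFrom_of_not_nonempty (L : Labeling P) (v : P)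
    (h : ¬ (univ.filter fun y => v < y).Nonempty) : promChainFrom L v = [v] := by
  rw [promChainFrom, dif_neg h]

lemma exists_promChainFrom_eq_cons (L : Labeling P) (v : P) :
    ∃ t, promChainFrom L v = v :: t := by
  rw [promChainFrom]
  split <;> exact ⟨_, rfl⟩

lemma mem_promChainFrom_self (L : Labeling P) (v : P) : v ∈ promChainFrom L v := by
  obtain ⟨t, ht⟩ := exists_promChainFrom_eq_cons L v
  exact ht ▸ List.mem_cons_self

lemma le_of_mem_promChainFrom {L : Labeling P} {v z : P} (hz : z ∈ promChainFrom L v) :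
    v ≤ z := by
  induction v using promChainFrom.induct (L := L) with
  | case1 v h ih =>
    rcases List.mem_cons.mp (promChainFrom_of_nonempty L v h ▸ hz) with rfl | hz
    · exact le_rfl
    · exact (lt_lSucc L v h).le.trans (ih hz)
  | case2 v h =>
    rw [promChainFrom_of_not_nonempty L v h, List.mem_singleton] at hz
    exact hz.ge

lemma formPerm_promChainFrom {L : Labeling P} {v z : P} (hz : z ∈ promChainFrom L v) :
    (promChainFrom L v).formPerm z =
      if h : (univ.filter fun y => z < y).Nonempty then lSucc L z h else v := by
  induction v using promChainFrom.induct (L := L) with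
  | case1 v h ih =>
    have hvw : v < lSucc L v h := lt_lSucc L v h
    have hv : v ∉ promChainFrom L (lSucc L v h) := fun hv =>
      (le_of_mem_promChainFrom hv).not_gt hvw
    obtain ⟨t, ht⟩ := exists_promChainFrom_eq_cons L (lSucc L v h)
    rcases List.mem_cons.mp (promChainFrom_of_nonempty L v h ▸ hz) with rfl | hz
    · rw [promChainFrom_of_nonempty L z h, ht, List.formPerm_cons_cons, Equiv.Perm.mul_apply,
        ← ht, List.formPerm_apply_of_notMem hv, Equiv.swap_apply_left, dif_pos h]
    · rw [promChainFrom_of_nonempty L v h, ht, List.formPerm_cons_cons, Equiv.Perm.mul_apply,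
        ← ht, ih hz]
      split_ifs with hz'
      · have hlt : lSucc L v h < lSucc L z hz' :=
          (le_of_mem_promChainFrom hz).trans_lt (lt_lSucc L z hz')
        exact Equiv.swap_apply_of_ne_of_ne (hvw.trans hlt).ne' hlt.ne'
      · exact Equiv.swap_apply_right _ _
  | case2 v h =>
    rw [promChainFrom_of_not_nonempty L v h, List.mem_singleton] at hz
    subst hz
    rw [promChainFrom_of_not_nonempty L z h, List.formPerm_singleton, dif_neg h]
    rfl

lemma finRotate_symm_val_add_one {n : ℕ} (a : Fin n) :
    ((finRotate n).symm a : ℕ) + 1 = if (a : ℕ) = 0 then n else a := by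
  obtain ⟨n, rfl⟩ : ∃ m, n = m + 1 := Nat.exists_eq_add_one.mpr a.pos
  rw [finRotate_symm_apply, Fin.coe_sub_one]
  simp only [Fin.ext_iff, Fin.val_zero]
  split_ifs <;> omega

section PromotionChain

variable [Nonempty P]

def promChain (M : Labeling P) : List P :=
  promChainFrom M (M.symm ⟨0, Fintype.card_pos⟩)

lemma promote_val_add_one (M : Labeling P) (z : P) :
    (promote M z : ℕ) + 1 =
      if (M ((promChain M).formPerm z) : ℕ) = 0 then Fintype.card P
      else M ((promChain M).formPerm z) := by
  rw [promote, dif_pos ‹_›]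
  exact finRotate_symm_val_add_one _

lemma promote_val_add_one_of_not_mem {M : Labeling P} {z : P} (hz : z ∉ promChain M) :
    (promote M z : ℕ) + 1 = M z := by
  have hz0 : (M z : ℕ) ≠ 0 := fun h0 => hz <| by
    rw [show z = M.symm ⟨0, Fintype.card_pos⟩ from M.eq_symm_apply.mpr (Fin.ext h0)]
    exact mem_promChainFrom_self _ _
  rw [promote_val_add_one, List.formPerm_apply_of_notMem hz, if_neg hz0]

lemma promote_val_add_one_of_mem {M : Labeling P} {z : P} (hz : z ∈ promChain M)
    (h : (univ.filter fun y => z < y).Nonempty) :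
    (promote M z : ℕ) + 1 = M (lSucc M z h) := by
  have h0 : (M (lSucc M z h) : ℕ) ≠ 0 := fun h0 => by
    have hle := le_of_mem_promChainFrom hz
    rw [show M.symm ⟨0, Fintype.card_pos⟩ = lSucc M z h from
      M.symm_apply_eq.mpr (Fin.ext h0.symm)] at hle
    exact hle.not_gt (lt_lSucc M z h)
  rw [promote_val_add_one, promChain, formPerm_promChainFrom hz, dif_pos h, if_neg h0]

lemma le_promote_val_add_one_of_mem {M : Labeling P} {z : P} (hz : z ∈ promChain M) {k : ℕ}
    (hk : k ≤ Fintype.card P) (habove : ∀ w, z < w → k ≤ M w) :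
    k ≤ (promote M z : ℕ) + 1 := by
  by_cases h : (univ.filter fun y => z < y).Nonempty
  · rw [promote_val_add_one_of_mem hz h]
    exact habove _ (lt_lSucc M z h)
  · rw [promote_val_add_one, promChain, formPerm_promChainFrom hz, dif_neg h,
      Equiv.apply_symm_apply]
    simpa using hk

end PromotionChain

lemma le_promote_val_add_one {M : Labeling P} {z : P} {k : ℕ} (hk : k ≤ Fintype.card P)
    (hz : k ≤ M z) (habove : ∀ w, z < w → k ≤ M w) : k ≤ (promote M z : ℕ) + 1 := by
  have : Nonempty P := ⟨z⟩
  by_cases hzC : z ∈ promChain M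
  · exact le_promote_val_add_one_of_mem hzC hk habove
  · rwa [promote_val_add_one_of_not_mem hzC]

def IsLinearExtAbove (M : Labeling P) (t : ℕ) : Prop :=
  ∀ ⦃x y : P⦄, x ≤ y → t ≤ (M x : ℕ) → M x ≤ M y

lemma IsLinearExtAbove.label_le_promote_val_add_one {M : Labeling P} {t : ℕ}
    (hM : IsLinearExtAbove M t) {z : P} (hz : t ≤ (M z : ℕ)) :
    (M z : ℕ) ≤ (promote M z : ℕ) + 1 :=
  le_promote_val_add_one (M z).isLt.le le_rfl fun _ hw => hM hw.le hz

lemma isLinearExtAbove_promote {M : Labeling P} {t : ℕ} (hM : IsLinearExtAbove M (t + 1)) :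
    IsLinearExtAbove (promote M) t := by
  intro x y hxy hx
  have : Nonempty P := ⟨x⟩
  rcases hxy.eq_or_lt with rfl | hlt
  · exact le_rfl
  have hxy' : (promote M x : ℕ) + 1 ≤ M y := by
    by_cases hxC : x ∈ promChain M
    · rw [promote_val_add_one_of_mem hxC ⟨y, by simpa⟩]
      exact label_lSucc_le M x _ hlt
    · rw [promote_val_add_one_of_not_mem hxC]
      exact hM hxy (by have := promote_val_add_one_of_not_mem hxC; omega)
  have hy := hM.label_le_promote_val_add_one (z := y) (by omega)
  exact Fin.le_def.mpr (by omega)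

lemma isLinearExtAbove_promote_of_mem_promChain [Nonempty P] {M : Labeling P} {s : ℕ}
    (hM : IsLinearExtAbove M (s + 2)) {q : P} (hq : (M q : ℕ) = s + 1)
    (hqC : q ∈ promChain M) : IsLinearExtAbove (promote M) s := by
  intro x y hxy hx
  rcases hx.eq_or_lt with hxs | hxs
  swap
  · exact isLinearExtAbove_promote hM hxy hxs
  rcases hxy.eq_or_lt with rfl | hlt
  · exact le_rfl
  have hxC : x ∈ promChain M := by
    by_contra hxC
    have := promote_val_add_one_of_not_mem hxC
    have hxq : x = q := M.injective (Fin.ext (by omega))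
    exact hxC (hxq ▸ hqC)
  have hsucc := promote_val_add_one_of_mem hxC ⟨y, by simpa⟩
  have habove : ∀ w, x < w → s + 1 ≤ M w := fun w hw =>
    hxs ▸ hsucc ▸ label_lSucc_le M x _ hw
  have hy := le_promote_val_add_one (by omega) (habove y hlt) fun w hw => habove w (hlt.trans hw)
  exact Fin.le_def.mpr (by omega)

def IsAlmostLinearExtAbove (M : Labeling P) (s : ℕ) : Prop :=
  IsLinearExtAbove M (s + 1) ∧ (IsLinearExtAbove M s ∨ ∃ q, (M q : ℕ) = s ∧ ¬ IsMin q)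

lemma isAlmostLinearExtAbove_of_not_isMin {L : Labeling P} (hn : 0 < Fintype.card P)
    (hL : ¬ IsMin (L.symm ⟨Fintype.card P - 1, Nat.sub_lt hn Nat.one_pos⟩)) :
    IsAlmostLinearExtAbove L (Fintype.card P - 1) := by
  refine ⟨fun x _ _ hx => absurd (L x).isLt (by omega), Or.inr ⟨_, ?_, hL⟩⟩
  rw [Equiv.apply_symm_apply]

lemma isAlmostLinearExtAbove_promote {M : Labeling P} {s : ℕ}
    (hM : IsAlmostLinearExtAbove M (s + 1)) : IsAlmostLinearExtAbove (promote M) s := by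
  obtain ⟨hM2, hM1 | ⟨q, hq, hqmin⟩⟩ := hM
  · exact ⟨isLinearExtAbove_promote hM2, Or.inl (isLinearExtAbove_promote hM1)⟩
  refine ⟨isLinearExtAbove_promote hM2, ?_⟩
  have : Nonempty P := ⟨q⟩
  by_cases hqC : q ∈ promChain M
  · exact Or.inl (isLinearExtAbove_promote_of_mem_promChain hM2 hq hqC)
  · have := promote_val_add_one_of_not_mem hqC
    exact Or.inr ⟨q, by omega, hqmin⟩

lemma IsAlmostLinearExtAbove.iterate_promote {M : Labeling P} {s : ℕ} (k : ℕ)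
    (hM : IsAlmostLinearExtAbove M (s + k)) :
    IsAlmostLinearExtAbove (promote^[k] M) s := by
  induction k generalizing M with
  | zero => exact hM
  | succ k ih => exact ih (isAlmostLinearExtAbove_promote hM)

lemma IsAlmostLinearExtAbove.isLinearExt {M : Labeling P} (hM : IsAlmostLinearExtAbove M 1) :
    IsLinearExt M := by
  obtain ⟨hM2, hM1⟩ := hM
  suffices hM1 : IsLinearExtAbove M 1 by
    intro x y hxy
    by_cases hx : (M x : ℕ) = 0
    · exact Fin.le_def.mpr (hx ▸ Nat.zero_le _)
    · exact hM1 hxy (by omega)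
  rcases hM1 with hM1 | ⟨q, hq, hqmin⟩
  · exact hM1
  intro x y hxy hx
  rcases hx.eq_or_lt with hx1 | hx2
  swap
  · exact hM2 hxy hx2
  obtain rfl : q = x := M.injective (Fin.ext (by omega))
  obtain ⟨p, hpq⟩ := not_isMin_iff.mp hqmin
  rw [Fin.le_def, hq]
  by_contra hy
  have hpy : (M p : ℕ) ≠ M y := Fin.val_ne_iff.mpr (M.injective.ne (hpq.trans_le hxy).ne)
  have hpq' : (M p : ℕ) ≠ M q := Fin.val_ne_iff.mpr (M.injective.ne hpq.ne)
  have := Fin.le_def.mp (hM2 (hpq.le.trans hxy) (by omega))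
  omega

/-- If `L` is a tangled labeling of `P`, then `L⁻¹(n)` is a minimal
element of `P`. -/
theorem tangled_label_n_minimal (L : Labeling P) (h : IsTangled L) :
    IsMin (L.symm ⟨Fintype.card P - 1,
      Nat.sub_lt (lt_of_lt_of_le (by norm_num) h.1) Nat.one_pos⟩) := by
  obtain ⟨hn, hL⟩ := h
  by_contra hmin
  have hstart := isAlmostLinearExtAbove_of_not_isMin (by omega) hmin
  rw [show Fintype.card P - 1 = 1 + (Fintype.card P - 2) by omega] at hstart
  exact hL (hstart.iterate_promote _).isLinearExt

end
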